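/- Let p be a prime, A a finite abelian p-group, χ₀ : A → ℤ/p the characteristic function of 0, M := fdeg(χ₀), and f : A → ℤ/p. If fdeg(f) < M, then ∑_{x ∈ A} f(x) = 0 in ℤ/p. -/

import Mathlib

open scoped BigOperators

/-- Action of the integral group ring `ℤ[A]` on functions `A → B`:
`(τ_a * f)(x) = f(x + a)`, extended linearly. -/
noncomputable def groupRingAct {A B : Type*} [AddCommGroup A] [AddCommGroup B]
    (r : AddMonoidAlgebra ℤ A) (f : A → B) : A → B :=
  fun x => r.coeff.sum fun a z => z • f (x + a)

/-- The augmentation ideal of the group ring `R[A]`. -/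
noncomputable def augIdealR (R : Type*) (A : Type*) [CommRing R] [AddCommGroup A] :
    Ideal (AddMonoidAlgebra R A) :=
  Ideal.span {r : AddMonoidAlgebra R A | ∃ a : A, r = AddMonoidAlgebra.single a 1 - 1}

/-- The augmentation ideal of `ℤ[A]`. -/
noncomputable def augIdeal (A : Type*) [AddCommGroup A] : Ideal (AddMonoidAlgebra ℤ A) :=
  augIdealR ℤ A

/-- The functional degree of `f : A → B`: the least `n` with `I^(n+1) * f = 0`,
where `I` is the augmentation ideal of `ℤ[A]`; `⊤` if there is no such `n`. -/
noncomputable def fdeg {A B : Type*} [AddCommGroup A] [AddCommGroup B] (f : A → B) : ℕ∞ :=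
  sInf {N : ℕ∞ | ∃ n : ℕ, N = (n : ℕ∞) ∧
    ∀ r ∈ augIdeal A ^ (n + 1), groupRingAct r f = 0}

/-! If `∑ f ≠ 0`, write `f = r • χ₀` with `r = ∑ₐ f(-a) τₐ`. The reduction of `r` to `𝔽_p[A]` has
augmentation `∑ f`, a unit, and differs from it by a combination of the `τₐ - 1`, which are
nilpotent in characteristic `p` because `A` is a `p`-group. So `r` is invertible modulo `p`, and
every power of the augmentation ideal killing `f` also kills `χ₀`: `fdeg χ₀ ≤ fdeg f`. -/

open AddMonoidAlgebra

section Action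

variable {A B : Type*} [AddCommGroup A] [AddCommGroup B]

@[simp]
lemma groupRingAct_zero (f : A → B) : groupRingAct (0 : AddMonoidAlgebra ℤ A) f = 0 := by
  funext x
  exact Finsupp.sum_zero_index

lemma groupRingAct_add (r s : AddMonoidAlgebra ℤ A) (f : A → B) :
    groupRingAct (r + s) f = groupRingAct r f + groupRingAct s f := by
  funext x
  exact Finsupp.sum_add_index' (fun _ => zero_smul ℤ _) fun _ _ _ => add_smul _ _ _

lemma groupRingAct_add_right (r : AddMonoidAlgebra ℤ A) (f g : A → B) :
    groupRingAct r (f + g) = groupRingAct r f + groupRingAct r g := by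
  funext x
  simp only [groupRingAct, Pi.add_apply, smul_add, Finsupp.sum_add]

lemma groupRingAct_single (a : A) (z : ℤ) (f : A → B) :
    groupRingAct (single a z) f = fun x => z • f (x + a) := by
  funext x
  exact Finsupp.sum_single_index (zero_smul ℤ _)

lemma groupRingAct_mul (r s : AddMonoidAlgebra ℤ A) (f : A → B) :
    groupRingAct (r * s) f = groupRingAct r (groupRingAct s f) := by
  induction r using AddMonoidAlgebra.induction_linear with
  | zero => simp
  | add r₁ r₂ h₁ h₂ => rw [add_mul, groupRingAct_add, groupRingAct_add, h₁, h₂]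
  | single a y =>
    induction s using AddMonoidAlgebra.induction_linear with
    | zero => funext x; simp [groupRingAct_single]
    | add s₁ s₂ h₁ h₂ =>
      rw [mul_add, groupRingAct_add, h₁, h₂, groupRingAct_add, groupRingAct_add_right]
    | single b z =>
      simp only [single_mul_single, groupRingAct_single, mul_smul, add_assoc]

lemma groupRingAct_indicator_zero [DecidableEq A] (r : AddMonoidAlgebra ℤ A) (b : B) :
    groupRingAct r (fun x => if x = 0 then b else 0) = fun x => r.coeff (-x) • b := by
  funext x
  simp +contextual [groupRingAct, add_eq_zero_iff_neg_eq, smul_ite]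

end Action

section Reduction

variable {A B : Type*} [AddCommGroup A] [AddCommGroup B] {n : ℕ} [Module (ZMod n) B]

lemma groupRingAct_eq_zero_of_map_eq_zero {r : AddMonoidAlgebra ℤ A}
    (hr : mapRingHom A (Int.castRingHom (ZMod n)) r = 0) (f : A → B) :
    groupRingAct r f = 0 := by
  funext x
  refine Finset.sum_eq_zero fun a _ => ?_
  have hra : (r.coeff a : ZMod n) = 0 := by
    simpa using congrArg (fun s => s.coeff a) hr
  change r.coeff a • f (x + a) = 0
  rw [← Int.cast_smul_eq_zsmul (ZMod n), hra, zero_smul]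

lemma groupRingAct_eq_zero_of_isUnit_map {J : Ideal (AddMonoidAlgebra ℤ A)}
    {r : AddMonoidAlgebra ℤ A} (hr : IsUnit (mapRingHom A (Int.castRingHom (ZMod n)) r))
    {f g : A → B} (hrg : groupRingAct r g = f) (hJ : ∀ u ∈ J, groupRingAct u f = 0)
    {u : AddMonoidAlgebra ℤ A} (hu : u ∈ J) : groupRingAct u g = 0 := by
  obtain ⟨s', hs'⟩ := hr.exists_left_inv
  obtain ⟨s, rfl⟩ := map_surjective (M := A) (Int.castRingHom (ZMod n) : ℤ →+ ZMod n)
    ZMod.intCast_surjective s'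
  have hsr : mapRingHom A (Int.castRingHom (ZMod n)) (u * (1 - s * r)) = 0 := by
    rw [coe_mapRingHom] at hs'
    rw [map_mul, map_sub, map_mul, map_one, coe_mapRingHom, hs', sub_self, mul_zero]
  calc groupRingAct u g = groupRingAct (u * s * r + u * (1 - s * r)) g := by congr 1; ring
    _ = 0 := by
      rw [groupRingAct_add, groupRingAct_mul, hrg, hJ _ (J.mul_mem_right s hu),
        groupRingAct_eq_zero_of_map_eq_zero hsr, add_zero]

end Reduction

section Nilpotent

variable {R A : Type*} [CommRing R] [AddCommGroup A] {p : ℕ} [ExpChar R p]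

lemma isNilpotent_single_one_sub_one {a : A} (ha : ∃ n : ℕ, p ^ n • a = 0) :
    IsNilpotent (single a (1 : R) - 1) := by
  have : ExpChar (AddMonoidAlgebra R A) p := ExpChar.of_injective_algebraMap' R p
  obtain ⟨n, hn⟩ := ha
  refine ⟨p ^ n, ?_⟩
  rw [sub_pow_expChar_pow, single_pow, one_pow, one_pow, hn, ← one_def, sub_self]

noncomputable def augmentation (x : AddMonoidAlgebra R A) : R :=
  x.coeff.sum fun _ c => c

lemma sub_algebraMap_augmentation_mem_nilradical (hA : ∀ a : A, ∃ n : ℕ, p ^ n • a = 0)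
    (x : AddMonoidAlgebra R A) :
    x - algebraMap R _ (augmentation x) ∈ nilradical (AddMonoidAlgebra R A) := by
  induction x using AddMonoidAlgebra.induction_linear with
  | zero => simp [augmentation]
  | add x y hx hy =>
    rw [augmentation, coeff_add, Finsupp.sum_add_index' (fun _ => rfl) (fun _ _ _ => rfl),
      map_add, add_sub_add_comm]
    exact add_mem hx hy
  | single a c =>
    have hsingle : single a c - algebraMap R _ (augmentation (single a c)) =
        c • (single a 1 - 1) := by
      rw [augmentation, coeff_single, Finsupp.sum_single_index rfl, smul_sub, smul_single',
        mul_one, Algebra.algebraMap_eq_smul_one]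
    rw [hsingle]
    exact Submodule.smul_of_tower_mem _ c
      (mem_nilradical.2 (isNilpotent_single_one_sub_one (hA a)))

lemma isUnit_of_isUnit_augmentation (hA : ∀ a : A, ∃ n : ℕ, p ^ n • a = 0)
    {x : AddMonoidAlgebra R A} (hx : IsUnit (augmentation x)) : IsUnit x := by
  simpa using IsNilpotent.isUnit_add_right_of_commute
    (mem_nilradical.1 (sub_algebraMap_augmentation_mem_nilradical hA x))
    (hx.map (algebraMap R _)) (Commute.all _ _)

end Nilpotent

lemma fdeg_le_fdeg_of_forall {A B C : Type*} [AddCommGroup A] [AddCommGroup B] [AddCommGroup C]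
    {f : A → B} {g : A → C}
    (h : ∀ n : ℕ, (∀ r ∈ augIdeal A ^ (n + 1), groupRingAct r f = 0) →
      ∀ r ∈ augIdeal A ^ (n + 1), groupRingAct r g = 0) :
    fdeg g ≤ fdeg f :=
  le_sInf fun _ ⟨n, hN, hn⟩ => hN ▸ sInf_le ⟨n, rfl, h n hn⟩

theorem sum_eq_zero_of_fdeg_lt {p : ℕ} (hp : p.Prime) {A : Type*} [AddCommGroup A]
    [Fintype A] [DecidableEq A] (hA : ∀ x : A, ∃ n : ℕ, p ^ n • x = 0)
    (f : A → ZMod p)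
    (hf : fdeg f < fdeg (fun x : A => if x = 0 then (1 : ZMod p) else 0)) :
    ∑ x : A, f x = 0 := by
  have : Fact p.Prime := ⟨hp⟩
  by_contra hsum
  obtain ⟨r, hr⟩ := map_surjective (M := A) (Int.castRingHom (ZMod p) : ℤ →+ ZMod p)
    ZMod.intCast_surjective (ofCoeff (Finsupp.equivFunOnFinite.symm fun a => f (-a)))
  have hrχ : groupRingAct r (fun x : A => if x = 0 then (1 : ZMod p) else 0) = f := by
    funext x
    simpa [groupRingAct_indicator_zero] using congrArg (fun s => s.coeff (-x)) hr
  have hunit : IsUnit (mapRingHom A (Int.castRingHom (ZMod p)) r) := by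
    refine isUnit_of_isUnit_augmentation hA (isUnit_iff_ne_zero.2 ?_)
    rwa [coe_mapRingHom, hr, augmentation, Finsupp.sum_fintype _ _ fun _ => rfl,
      Fintype.sum_equiv (Equiv.neg A) _ f fun _ => by simp]
  exact hf.not_ge (fdeg_le_fdeg_of_forall fun n hn _ =>
    groupRingAct_eq_zero_of_isUnit_map hunit hrχ hn)
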